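/- arXiv:1902.08762 — 4 statements merged into one kernel-verified Lean document; each statement's English description precedes it below -/
import Mathlib

section
/- Let X be a Banach space, T a C₀-semigroup on X with ‖T(u)‖ ≤ M for all u ≥ 0 and generator A. Then for every x ∈ D(A) with x ≠ 0 and every u > 0, ‖(T(u) − I)x‖ ≤ C_M·(1 − e^{−‖Ax‖u/‖x‖})·‖x‖, where C_M = (M+1)/(1 − e^{−(M+1)/M}). -/
open Set

lemma exp_chord_aux {r r₀ : ℝ} (hr : 0 ≤ r) (hr0 : 0 < r₀) (h : r ≤ r₀) :
    r * (1 - Real.exp (-r₀)) ≤ r₀ * (1 - Real.exp (-r)) := by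
  have ht0 : 0 ≤ r / r₀ := div_nonneg hr hr0.le
  have ht1 : r / r₀ ≤ 1 := (div_le_one hr0).2 h
  have hc := convexOn_exp.2 (mem_univ (0:ℝ)) (mem_univ (-r₀))
    (show (0:ℝ) ≤ 1 - r / r₀ by linarith) ht0 (by ring)
  simp only [smul_eq_mul, mul_zero, zero_add, Real.exp_zero, mul_one] at hc
  have hrr : r / r₀ * (-r₀) = -r := by field_simp
  rw [hrr] at hc
  have h2 : r / r₀ * r₀ = r := div_mul_cancel₀ _ hr0.ne'
  nlinarith [Real.exp_pos (-r), Real.exp_pos (-r₀)]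

/-- the moment-type estimate
`‖(T(u) - I)x‖ ≤ C_M (1 - e^{-‖Ax‖u/‖x‖}) ‖x‖` with `C_M = (M+1)/(1 - e^{-(M+1)/M})`
for a `C₀`-semigroup `T` bounded by `M` with generator `A`. -/
theorem norm_semigroup_sub_id_le_moment {X : Type*} [NormedAddCommGroup X]
    [NormedSpace ℂ X] [CompleteSpace X] (T : ℝ → (X →L[ℂ] X)) (M : ℝ) (hM : 1 ≤ M)
    (hT0 : T 0 = 1)
    (hTsem : ∀ s t : ℝ, 0 ≤ s → 0 ≤ t → T (s + t) = (T s).comp (T t))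
    (hTcont : ∀ x : X, ContinuousOn (fun t => T t x) (Ici 0))
    (hTbound : ∀ u : ℝ, 0 ≤ u → ‖T u‖ ≤ M)
    (D : Set X) (A : X → X)
    (hgen : ∀ x ∈ D, ∀ t : ℝ, 0 ≤ t →
      HasDerivWithinAt (fun s => T s x) (T t (A x)) (Ici 0) t)
    (x : X) (hx : x ∈ D) (hx0 : x ≠ 0) (u : ℝ) (hu : 0 < u) :
    ‖T u x - x‖ ≤
      (M + 1) / (1 - Real.exp (-((M + 1) / M))) *
        (1 - Real.exp (-(‖A x‖ * u / ‖x‖))) * ‖x‖ := by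
  have hMpos : (0:ℝ) < M := lt_of_lt_of_le one_pos hM
  have hxpos : (0:ℝ) < ‖x‖ := norm_pos_iff.2 hx0
  set r₀ : ℝ := (M + 1) / M with hr₀def
  have hr₀pos : 0 < r₀ := div_pos (by linarith) hMpos
  set r : ℝ := ‖A x‖ * u / ‖x‖ with hrdef
  have hrnn : 0 ≤ r := div_nonneg (mul_nonneg (norm_nonneg _) hu.le) hxpos.le
  have hden : 0 < 1 - Real.exp (-r₀) := by
    have := Real.exp_lt_one_iff.2 (neg_lt_zero.2 hr₀pos)
    linarith
  -- bound 1 : ‖T u x - x‖ ≤ M * ‖A x‖ * u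
  have hbound1 : ‖T u x - x‖ ≤ M * ‖A x‖ * u := by
    have hconv : Convex ℝ (Icc (0:ℝ) u) := convex_Icc 0 u
    have := hconv.norm_image_sub_le_of_norm_hasDerivWithin_le
      (f := fun s => T s x) (f' := fun t => T t (A x)) (C := M * ‖A x‖)
      (fun t ht => (hgen x hx t ht.1).mono Icc_subset_Ici_self)
      (fun t ht => by
        calc ‖T t (A x)‖ ≤ ‖T t‖ * ‖A x‖ := (T t).le_opNorm _
          _ ≤ M * ‖A x‖ := by
            exact mul_le_mul_of_nonneg_right (hTbound t ht.1) (norm_nonneg _))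
      (Set.left_mem_Icc.2 hu.le) (Set.right_mem_Icc.2 hu.le)
    simpa [hT0, sub_zero, abs_of_pos hu, mul_assoc] using this
  -- bound 2 : ‖T u x - x‖ ≤ (M + 1) * ‖x‖
  have hbound2 : ‖T u x - x‖ ≤ (M + 1) * ‖x‖ := by
    calc ‖T u x - x‖ ≤ ‖T u x‖ + ‖x‖ := norm_sub_le _ _
      _ ≤ M * ‖x‖ + ‖x‖ := by
          have : ‖T u x‖ ≤ ‖T u‖ * ‖x‖ := (T u).le_opNorm _
          have := (T u).le_opNorm x
          nlinarith [hTbound u hu.le, norm_nonneg x]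
      _ = (M + 1) * ‖x‖ := by ring
  show ‖T u x - x‖ ≤ (M + 1) / (1 - Real.exp (-r₀)) * (1 - Real.exp (-r)) * ‖x‖
  rcases le_or_gt r r₀ with hcase | hcase
  · -- need M * r ≤ C * (1 - e^{-r})
    have hkey := exp_chord_aux hrnn hr₀pos hcase
    have hMr : M * ‖A x‖ * u = M * r * ‖x‖ := by
      rw [hrdef]; field_simp
    refine hbound1.trans ?_
    rw [hMr]
    refine mul_le_mul_of_nonneg_right ?_ hxpos.le
    rw [div_mul_eq_mul_div, le_div_iff₀ hden]
    have hMr0 : M * r₀ = M + 1 := by rw [hr₀def]; field_simp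
    calc M * r * (1 - Real.exp (-r₀)) = M * (r * (1 - Real.exp (-r₀))) := by ring
      _ ≤ M * (r₀ * (1 - Real.exp (-r))) := mul_le_mul_of_nonneg_left hkey hMpos.le
      _ = (M * r₀) * (1 - Real.exp (-r)) := by ring
      _ = (M + 1) * (1 - Real.exp (-r)) := by rw [hMr0]
  · -- need M + 1 ≤ C * (1 - e^{-r})
    refine hbound2.trans ?_
    refine mul_le_mul_of_nonneg_right ?_ hxpos.le
    have hmono : Real.exp (-r) ≤ Real.exp (-r₀) :=
      Real.exp_le_exp.2 (by linarith)
    calc M + 1 = (M + 1) / (1 - Real.exp (-r₀)) * (1 - Real.exp (-r₀)) := by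
          field_simp
      _ ≤ (M + 1) / (1 - Real.exp (-r₀)) * (1 - Real.exp (-r)) := by
          apply mul_le_mul_of_nonneg_left (by linarith)
          positivity
end

section
/- Let X be a Banach space and S(t) (t ≥ 0) a uniformly bounded semigroup of bounded operators on X obtained as S(t)x = ∫ T(u)x dν_t(u), where ν_t is a convolution semigroup of finite positive measures on ℝ≥0ⁿ converging narrowly to δ₀ as t → 0⁺, and T is a C₀-n-parameter semigroup with ‖T(u)‖ ≤ Mⁿ. Then S is strongly continuous at 0: S(t)x → x for every x ∈ X. -/
open Set MeasureTheory Filter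

/-- if `S(t)x = ∫ T(u)x dν_t(u)` where the finite positive measures
`ν_t` on `ℝ≥0ⁿ` converge narrowly to `δ₀` as `t → 0⁺` and `T` is a strongly
continuous `n`-parameter semigroup bounded by `Mⁿ`, then `S(t)x → x` for all `x`. -/
theorem subordinate_strongly_continuous_at_zero {X : Type*} [NormedAddCommGroup X]
    [NormedSpace ℂ X] [CompleteSpace X] (n : ℕ) (T : (Fin n → ℝ) → (X →L[ℂ] X))
    (M : ℝ) (hM : 1 ≤ M)
    (hT0 : T 0 = 1)
    (hTsem : ∀ u v : Fin n → ℝ, (∀ i, 0 ≤ u i) → (∀ i, 0 ≤ v i) →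
      T (u + v) = (T u).comp (T v))
    (hTcont : ∀ x : X, Continuous fun u => T u x)
    (hTbound : ∀ u : Fin n → ℝ, (∀ i, 0 ≤ u i) → ‖T u‖ ≤ M ^ n)
    (ν : ℝ → Measure (Fin n → ℝ)) (hfin : ∀ t, IsFiniteMeasure (ν t))
    (hsupp : ∀ t : ℝ, 0 < t → ν t {u | ¬ ∀ i, 0 ≤ u i} = 0)
    (hnarrow : ∀ f : (Fin n → ℝ) → ℝ, Continuous f → (∃ C, ∀ u, |f u| ≤ C) →
      Tendsto (fun t => ∫ u, f u ∂ν t) (nhdsWithin 0 (Ioi 0)) (nhds (f 0)))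
    (S : ℝ → X → X)
    (hS : ∀ t : ℝ, 0 < t → ∀ x : X, S t x = ∫ u, T u x ∂ν t) :
    ∀ x : X, Tendsto (fun t => S t x) (nhdsWithin 0 (Ioi 0)) (nhds x) := by
  intro x
  have hMn : (0:ℝ) ≤ M ^ n := pow_nonneg (le_trans zero_le_one hM) n
  set C : ℝ := (M ^ n + 1) * ‖x‖ with hCdef
  have hC : 0 ≤ C := mul_nonneg (by linarith) (norm_nonneg x)
  set f : (Fin n → ℝ) → ℝ := fun u => min ‖T u x - x‖ C with hfdef
  have hfc : Continuous f :=
    (((hTcont x).sub continuous_const).norm).min continuous_const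
  have hfb : ∀ u, |f u| ≤ C := by
    intro u
    rw [abs_of_nonneg (le_min (norm_nonneg _) hC)]
    exact min_le_right _ _
  have hf0 : f 0 = 0 := by
    simp [hfdef, hT0, hC]
  have h1 := hnarrow f hfc ⟨C, hfb⟩
  rw [hf0] at h1
  have h2 := hnarrow (fun _ => 1) continuous_const ⟨1, fun _ => by norm_num⟩
  -- the dominating function
  have hg : Tendsto (fun t => (∫ u, f u ∂ν t) + |(∫ _u, (1:ℝ) ∂ν t) - 1| * ‖x‖)
      (nhdsWithin 0 (Ioi 0)) (nhds 0) := by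
    have : Tendsto (fun t => |(∫ _u, (1:ℝ) ∂ν t) - 1| * ‖x‖)
        (nhdsWithin 0 (Ioi 0)) (nhds (|(1:ℝ) - 1| * ‖x‖)) :=
      (((h2.sub tendsto_const_nhds).abs).mul tendsto_const_nhds)
    simpa using h1.add this
  rw [tendsto_iff_norm_sub_tendsto_zero]
  apply squeeze_zero' (Eventually.of_forall fun t => norm_nonneg _) _ hg
  filter_upwards [self_mem_nhdsWithin] with t (ht : 0 < t)
  haveI := hfin t
  have hae : ∀ᵐ u ∂ν t, ∀ i, 0 ≤ u i := ae_iff.mpr (hsupp t ht)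
  have hint : Integrable (fun u => T u x) (ν t) := by
    refine Integrable.mono' (integrable_const (M ^ n * ‖x‖)) ((hTcont x).aestronglyMeasurable) ?_
    filter_upwards [hae] with u hu
    exact le_trans ((T u).le_opNorm x) (mul_le_mul_of_nonneg_right (hTbound u hu) (norm_nonneg x))
  have hintsub : Integrable (fun u => T u x - x) (ν t) := hint.sub (integrable_const x)
  have hmass : ∫ _u, (1:ℝ) ∂ν t = ((ν t) univ).toReal := by simp [Measure.real_def]
  have hSx : S t x - x = (∫ u, (T u x - x) ∂ν t) + (((ν t) univ).toReal - 1) • x := by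
    rw [hS t ht x, integral_sub hint (integrable_const x), integral_const, Measure.real_def, sub_smul, one_smul]
    abel
  rw [hSx]
  have hnorm1 : ‖∫ u, (T u x - x) ∂ν t‖ ≤ ∫ u, f u ∂ν t := by
    refine le_trans (norm_integral_le_integral_norm _) (le_of_eq (integral_congr_ae ?_))
    filter_upwards [hae] with u hu
    have hb : ‖T u x - x‖ ≤ C := by
      calc ‖T u x - x‖ ≤ ‖T u x‖ + ‖x‖ := norm_sub_le _ _
        _ ≤ M ^ n * ‖x‖ + ‖x‖ :=
          add_le_add_left (le_trans ((T u).le_opNorm x)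
            (mul_le_mul_of_nonneg_right (hTbound u hu) (norm_nonneg x))) _
        _ = C := by ring
    exact (min_eq_left hb).symm
  calc ‖(∫ u, (T u x - x) ∂ν t) + (((ν t) univ).toReal - 1) • x‖
      ≤ ‖∫ u, (T u x - x) ∂ν t‖ + ‖(((ν t) univ).toReal - 1) • x‖ := norm_add_le _ _
    _ ≤ (∫ u, f u ∂ν t) + |(∫ _u, (1:ℝ) ∂ν t) - 1| * ‖x‖ := by
        rw [norm_smul, hmass]
        exact add_le_add hnorm1 (le_of_eq rfl)
end

section
/- Let X be a Banach space and T a C₀-semigroup of contractions on X such that limsup_{t→0⁺} ‖I − T(t)‖ < 2. If S(t)x = ∫_{ℝ≥0} T(u)x dν_t(u) where ν_t are sub-probability measures converging narrowly to δ₀, then limsup_{t→0⁺} ‖I − S(t)‖ ≤ limsup_{t→0⁺} ‖I − T(t)‖ < 2. -/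
set_option maxHeartbeats 1000000

open Set MeasureTheory Filter

/-- for a contraction `C₀`-semigroup `T` with
`limsup_{t→0⁺} ‖I - T(t)‖ < 2` and `S(t)x = ∫ T(u)x dν_t(u)` with sub-probability
measures `ν_t` converging narrowly to `δ₀`, one has
`limsup_{t→0⁺} ‖I - S(t)‖ ≤ limsup_{t→0⁺} ‖I - T(t)‖ < 2`. -/
theorem limsup_id_sub_subordinate_le {X : Type*} [NormedAddCommGroup X]
    [NormedSpace ℂ X] [CompleteSpace X] (T : ℝ → (X →L[ℂ] X))
    (hT0 : T 0 = 1)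
    (hTsem : ∀ s t : ℝ, 0 ≤ s → 0 ≤ t → T (s + t) = (T s).comp (T t))
    (hTcont : ∀ x : X, Continuous fun t => T t x)
    (hTcontr : ∀ t : ℝ, 0 ≤ t → ‖T t‖ ≤ 1)
    (hb : limsup (fun t => ‖(1 : X →L[ℂ] X) - T t‖) (nhdsWithin 0 (Ioi 0)) < 2)
    (ν : ℝ → Measure ℝ)
    (hsub : ∀ t : ℝ, 0 < t → ν t Set.univ ≤ 1)
    (hsupp : ∀ t : ℝ, 0 < t → ν t (Iio (0 : ℝ)) = 0)
    (hnarrow : ∀ f : ℝ → ℝ, Continuous f → (∃ C, ∀ u, |f u| ≤ C) →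
      Tendsto (fun t => ∫ u, f u ∂ν t) (nhdsWithin 0 (Ioi 0)) (nhds (f 0)))
    (S : ℝ → (X →L[ℂ] X))
    (hS : ∀ t : ℝ, 0 < t → ∀ x : X, S t x = ∫ u, T u x ∂ν t) :
    limsup (fun t => ‖(1 : X →L[ℂ] X) - S t‖) (nhdsWithin 0 (Ioi 0)) ≤
        limsup (fun t => ‖(1 : X →L[ℂ] X) - T t‖) (nhdsWithin 0 (Ioi 0)) ∧
      limsup (fun t => ‖(1 : X →L[ℂ] X) - S t‖) (nhdsWithin 0 (Ioi 0)) < 2 := by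
  set L : Filter ℝ := nhdsWithin 0 (Ioi 0) with hL
  set G : ℝ → ℝ := fun t => ‖(1 : X →L[ℂ] X) - T t‖ with hG
  set F : ℝ → ℝ := fun t => ‖(1 : X →L[ℂ] X) - S t‖ with hF
  set b : ℝ := limsup G L with hbdef
  -- G is eventually bounded above by 2
  have hGle : ∀ u : ℝ, 0 ≤ u → G u ≤ 2 := by
    intro u hu
    calc G u ≤ ‖(1 : X →L[ℂ] X)‖ + ‖T u‖ := norm_sub_le _ _
      _ ≤ 1 + 1 := add_le_add ContinuousLinearMap.norm_id_le (hTcontr u hu)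
      _ = 2 := by norm_num
  have hbddG : IsBoundedUnder (· ≤ ·) L G := by
    refine isBoundedUnder_of_eventually_le (a := 2) ?_
    filter_upwards [self_mem_nhdsWithin] with u hu
    exact hGle u (le_of_lt hu)
  have hb0 : 0 ≤ b := by
    refine le_limsup_of_frequently_le ?_ hbddG
    exact Frequently.of_forall fun u => norm_nonneg _
  have key : ∀ ε : ℝ, 0 < ε → limsup F L ≤ b + 4 * ε := by
    intro ε hε
    -- δ such that G u ≤ b + ε on (0, δ)
    have hev : ∀ᶠ u in L, G u < b + ε :=
      eventually_lt_of_limsup_lt (by linarith) hbddG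
    rw [eventually_iff, hL, mem_nhdsGT_iff_exists_Ioo_subset] at hev
    obtain ⟨δ, hδ, hIoo⟩ := hev
    -- cutoff function
    set f : ℝ → ℝ := fun u => min 1 (max 0 (2 * u / δ - 1)) with hfdef
    have hfcont : Continuous f := by fun_prop
    have hf0 : f 0 = 0 := by
      simp only [hfdef]
      norm_num
    have hfnonneg : ∀ u, 0 ≤ f u := fun u => le_min zero_le_one (le_max_left _ _)
    have hfle1 : ∀ u, f u ≤ 1 := fun u => min_le_left _ _
    have hfbd : ∃ C, ∀ u, |f u| ≤ C := ⟨1, fun u => abs_le.2 ⟨by linarith [hfnonneg u], hfle1 u⟩⟩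
    have hfone : ∀ u : ℝ, δ ≤ u → f u = 1 := by
      intro u hu
      have hδ0 : (0:ℝ) < δ := hδ
      have : (1:ℝ) ≤ 2 * u / δ - 1 := by
        rw [le_sub_iff_add_le, le_div_iff₀ hδ0]
        linarith
      simp only [hfdef]
      rw [max_eq_right (by linarith), min_eq_left this]
    -- narrow convergence facts
    have hev1 : ∀ᶠ t in L, 1 - ε < ∫ u, (1:ℝ) ∂ν t :=
      (hnarrow (fun _ => 1) continuous_const ⟨1, fun u => by norm_num⟩).eventually
        (eventually_gt_nhds (by linarith))
    have hevf : ∀ᶠ t in L, ∫ u, f u ∂ν t < ε :=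
      (hnarrow f hfcont hfbd).eventually (by rw [hf0]; exact eventually_lt_nhds hε)
    have hFle : ∀ᶠ t in L, F t ≤ b + 4 * ε := by
      filter_upwards [self_mem_nhdsWithin, hev1, hevf] with t ht hm1 hmf
      have ht' : (0:ℝ) < t := ht
      haveI : IsFiniteMeasure (ν t) :=
        ⟨lt_of_le_of_lt (hsub t ht') ENNReal.one_lt_top⟩
      set m : ℝ := (ν t Set.univ).toReal with hmdef
      have hm_le : m ≤ 1 := by
        rw [hmdef]
        have := ENNReal.toReal_mono (by norm_num) (hsub t ht')
        simpa using this
      have hm0 : 0 ≤ m := ENNReal.toReal_nonneg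
      have hint1 : ∫ u, (1:ℝ) ∂ν t = m := by simp [hmdef, Measure.real]
      have hm1' : 1 - m < ε := by rw [← hint1]; linarith
      -- a.e. nonnegativity
      have hae : ∀ᵐ u ∂ν t, 0 ≤ u := by
        rw [ae_iff]
        have : {u : ℝ | ¬ 0 ≤ u} = Iio 0 := by ext u; simp [not_le]
        rw [this]; exact hsupp t ht'
      -- operator norm bound
      have hop : ‖(1 : X →L[ℂ] X) - S t‖ ≤ b + 4 * ε := by
        refine ContinuousLinearMap.opNorm_le_bound _ (by linarith) fun x => ?_
        have hintT : Integrable (fun u => T u x) (ν t) := by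
          refine Integrable.mono' (integrable_const ‖x‖) (hTcont x).aestronglyMeasurable ?_
          filter_upwards [hae] with u hu
          calc ‖T u x‖ ≤ ‖T u‖ * ‖x‖ := (T u).le_opNorm x
            _ ≤ 1 * ‖x‖ := by
                have := hTcontr u hu
                nlinarith [norm_nonneg x]
            _ = ‖x‖ := one_mul _
        have hintd : Integrable (fun u => x - T u x) (ν t) :=
          (integrable_const x).sub hintT
        have hintf : Integrable f (ν t) := by
          refine Integrable.mono' (integrable_const 1) hfcont.aestronglyMeasurable ?_
          exact Eventually.of_forall fun u => by
            rw [Real.norm_eq_abs]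
            exact abs_le.2 ⟨by linarith [hfnonneg u], hfle1 u⟩
        set g : ℝ → ℝ := fun u => (b + ε) * ‖x‖ + 2 * ‖x‖ * f u with hgdef
        have hintg : Integrable g (ν t) := (integrable_const _).add (hintf.const_mul _)
        have hptwise : ∀ᵐ u ∂ν t, ‖x - T u x‖ ≤ g u := by
          filter_upwards [hae] with u hu
          rcases lt_or_ge u δ with huδ | huδ
          · have hbound : ‖x - T u x‖ ≤ (b + ε) * ‖x‖ := by
              rcases eq_or_lt_of_le hu with h0 | h0
              · rw [← h0, hT0]
                simp [norm_nonneg x, hε, hb0]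
                nlinarith [norm_nonneg x]
              · have hG : G u < b + ε := hIoo ⟨h0, huδ⟩
                calc ‖x - T u x‖ = ‖((1 : X →L[ℂ] X) - T u) x‖ := by
                      simp [ContinuousLinearMap.sub_apply]
                  _ ≤ G u * ‖x‖ := ((1 : X →L[ℂ] X) - T u).le_opNorm x
                  _ ≤ (b + ε) * ‖x‖ := by nlinarith [norm_nonneg x]
            calc ‖x - T u x‖ ≤ (b + ε) * ‖x‖ := hbound
              _ ≤ g u := by
                  simp only [hgdef]
                  nlinarith [hfnonneg u, norm_nonneg x]
          · have hT2 : ‖x - T u x‖ ≤ 2 * ‖x‖ := by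
              calc ‖x - T u x‖ ≤ ‖x‖ + ‖T u x‖ := norm_sub_le _ _
                _ ≤ ‖x‖ + ‖x‖ := by
                    have h1 : ‖T u x‖ ≤ ‖T u‖ * ‖x‖ := (T u).le_opNorm x
                    have h2 := hTcontr u hu
                    nlinarith [norm_nonneg x]
                _ = 2 * ‖x‖ := by ring
            have : g u = (b + ε) * ‖x‖ + 2 * ‖x‖ := by
              simp only [hgdef, hfone u huδ, mul_one]
            rw [this]
            nlinarith [norm_nonneg x]
        have hintnorm : Integrable (fun u => ‖x - T u x‖) (ν t) := hintd.norm
        have hIle : ∫ u, ‖x - T u x‖ ∂ν t ≤ ∫ u, g u ∂ν t :=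
          integral_mono_ae hintnorm hintg hptwise
        have hIg : ∫ u, g u ∂ν t = (b + ε) * ‖x‖ * m + 2 * ‖x‖ * ∫ u, f u ∂ν t := by
          simp only [hgdef]
          rw [integral_add (integrable_const _) (hintf.const_mul _),
            integral_const, integral_const_mul, smul_eq_mul, Measure.real, ← hmdef]
          ring
        have hfint_nonneg : 0 ≤ ∫ u, f u ∂ν t := integral_nonneg hfnonneg
        have hsplit : ∫ u, (x - T u x) ∂ν t = m • x - S t x := by
          rw [integral_sub (integrable_const x) hintT, integral_const, hS t ht' x, Measure.real, ← hmdef]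
        have hdecomp : ((1 : X →L[ℂ] X) - S t) x = (1 - m) • x + ∫ u, (x - T u x) ∂ν t := by
          rw [hsplit]
          simp only [ContinuousLinearMap.sub_apply, ContinuousLinearMap.one_apply]
          rw [sub_smul, one_smul]
          abel
        calc ‖((1 : X →L[ℂ] X) - S t) x‖
            = ‖(1 - m) • x + ∫ u, (x - T u x) ∂ν t‖ := by rw [hdecomp]
          _ ≤ ‖(1 - m) • x‖ + ‖∫ u, (x - T u x) ∂ν t‖ := norm_add_le _ _
          _ ≤ |1 - m| * ‖x‖ + ∫ u, ‖x - T u x‖ ∂ν t := by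
              rw [norm_smul, Real.norm_eq_abs]
              exact add_le_add_right (norm_integral_le_integral_norm _) _
          _ ≤ ε * ‖x‖ + ((b + ε) * ‖x‖ * m + 2 * ‖x‖ * ∫ u, f u ∂ν t) := by
              refine add_le_add ?_ (hIle.trans (le_of_eq hIg))
              have : |1 - m| ≤ ε := abs_le.2 ⟨by linarith, le_of_lt hm1'⟩
              nlinarith [norm_nonneg x, abs_nonneg (1 - m)]
          _ ≤ ε * ‖x‖ + ((b + ε) * ‖x‖ + 2 * ‖x‖ * ε) := by
              have h1 : (b + ε) * ‖x‖ * m ≤ (b + ε) * ‖x‖ * 1 :=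
                mul_le_mul_of_nonneg_left hm_le
                  (mul_nonneg (by linarith) (norm_nonneg x))
              have h2 : 2 * ‖x‖ * ∫ u, f u ∂ν t ≤ 2 * ‖x‖ * ε :=
                mul_le_mul_of_nonneg_left hmf.le
                  (by positivity)
              rw [mul_one] at h1
              linarith
          _ = (b + 4 * ε) * ‖x‖ := by ring
      exact hop
    have hcobdd : IsCoboundedUnder (· ≤ ·) L F := by
      refine IsBoundedUnder.isCoboundedUnder_flip
        (isBoundedUnder_of_eventually_ge (a := 0) ?_)
      exact Eventually.of_forall fun u => norm_nonneg _
    exact limsup_le_of_le hcobdd hFle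
  have hmain : limsup F L ≤ b := by
    refine le_of_forall_pos_le_add fun ε hε => ?_
    have := key (ε / 4) (by linarith)
    linarith
  exact ⟨hmain, lt_of_le_of_lt hmain hb⟩
end

section
/- Let X be a Banach space, A ∈ Gen(X) generating a semigroup bounded by M, and ψ ∈ T₁ bounded on (−∞,0) with representation ψ(s) = c₀ + ∫ (e^{su} − 1) dμ(u) (so c₁ = 0 and μ is finite). Then the operator ψ(A)x = c₀x + ∫ (T(u) − I)x dμ(u) is a bounded operator on X with ‖ψ(A)‖ ≤ |c₀| + (M+1)·μ(ℝ>0). -/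
open Set MeasureTheory

/-- if `ψ ∈ T₁` is bounded, so `ψ(s) = c₀ + ∫ (e^{su} - 1) dμ(u)` with
`μ` finite, then `ψ(A)x = c₀ x + ∫ (T(u) - I)x dμ(u)` defines a bounded operator with
`‖ψ(A)‖ ≤ |c₀| + (M+1)·μ((0,∞))`, where `T` is the semigroup generated by `A`,
`‖T(u)‖ ≤ M`. -/
theorem bounded_T1_operator_bounded {X : Type*} [NormedAddCommGroup X]
    [NormedSpace ℂ X] [CompleteSpace X] (T : ℝ → (X →L[ℂ] X)) (M : ℝ) (hM : 1 ≤ M)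
    (hT0 : T 0 = 1)
    (hTsem : ∀ s t : ℝ, 0 ≤ s → 0 ≤ t → T (s + t) = (T s).comp (T t))
    (hTcont : ∀ x : X, Continuous fun t => T t x)
    (hTbound : ∀ u : ℝ, 0 ≤ u → ‖T u‖ ≤ M)
    (c₀ : ℝ) (hc₀ : c₀ ≤ 0) (μ : Measure ℝ) [IsFiniteMeasure μ]
    (ψ : ℝ → ℝ)
    (hψ : ∀ s < (0 : ℝ),
      ψ s = c₀ + ∫ u in Ioi (0 : ℝ), (Real.exp (s * u) - 1) ∂μ) :
    ∃ B : X →L[ℂ] X,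
      (∀ x : X, B x = c₀ • x + ∫ u in Ioi (0 : ℝ), (T u x - x) ∂μ) ∧
      ‖B‖ ≤ |c₀| + (M + 1) * (μ (Ioi (0 : ℝ))).toReal := by
  have hint : ∀ x : X, Integrable (fun u => T u x - x) (μ.restrict (Ioi 0)) := by
    intro x
    have hc : Continuous fun u : ℝ => T u x - x := (hTcont x).sub continuous_const
    refine Integrable.mono' (integrable_const ((M + 1) * ‖x‖)) hc.aestronglyMeasurable ?_
    filter_upwards [ae_restrict_mem measurableSet_Ioi] with u hu
    have h1 : ‖T u x‖ ≤ M * ‖x‖ :=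
      le_trans ((T u).le_opNorm x) (by gcongr; exact hTbound u (le_of_lt hu))
    calc ‖T u x - x‖ ≤ ‖T u x‖ + ‖x‖ := norm_sub_le _ _
      _ ≤ M * ‖x‖ + ‖x‖ := by gcongr
      _ = (M + 1) * ‖x‖ := by ring
  let L : X →ₗ[ℂ] X :=
    { toFun := fun x => c₀ • x + ∫ u in Ioi (0 : ℝ), (T u x - x) ∂μ
      map_add' := by
        intro x y
        have : (fun u : ℝ => T u (x + y) - (x + y))
            = fun u => (T u x - x) + (T u y - y) := by
          funext u; simp [map_add]; abel
        show c₀ • (x + y) + ∫ u in Ioi (0 : ℝ), (T u (x + y) - (x + y)) ∂μ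
            = (c₀ • x + ∫ u in Ioi (0 : ℝ), (T u x - x) ∂μ)
            + (c₀ • y + ∫ u in Ioi (0 : ℝ), (T u y - y) ∂μ)
        rw [this, integral_add (hint x) (hint y), smul_add]
        abel
      map_smul' := by
        intro z x
        have : (fun u : ℝ => T u (z • x) - z • x)
            = fun u => z • (T u x - x) := by
          funext u; simp [_root_.map_smul, smul_sub]
        show c₀ • (z • x) + ∫ u in Ioi (0 : ℝ), (T u (z • x) - z • x) ∂μ
            = z • (c₀ • x + ∫ u in Ioi (0 : ℝ), (T u x - x) ∂μ)
        rw [this, integral_smul]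
        rw [smul_add]
        rw [smul_comm] }
  have hCnn : 0 ≤ |c₀| + (M + 1) * (μ (Ioi (0 : ℝ))).toReal := by
    have : (0:ℝ) ≤ (M + 1) * (μ (Ioi (0 : ℝ))).toReal := by positivity
    positivity
  have hbd : ∀ x : X, ‖L x‖ ≤ (|c₀| + (M + 1) * (μ (Ioi (0 : ℝ))).toReal) * ‖x‖ := by
    intro x
    have h2 : ‖∫ u in Ioi (0 : ℝ), (T u x - x) ∂μ‖
        ≤ (M + 1) * ‖x‖ * (μ (Ioi (0 : ℝ))).toReal := by
      have := norm_integral_le_of_norm_le_const (μ := μ.restrict (Ioi 0))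
        (f := fun u => T u x - x) (C := (M + 1) * ‖x‖) ?_
      · simpa [Measure.restrict_apply_univ, measureReal_def] using this
      · filter_upwards [ae_restrict_mem measurableSet_Ioi] with u hu
        have h1 : ‖T u x‖ ≤ M * ‖x‖ :=
          le_trans ((T u).le_opNorm x) (by gcongr; exact hTbound u (le_of_lt hu))
        calc ‖T u x - x‖ ≤ ‖T u x‖ + ‖x‖ := norm_sub_le _ _
          _ ≤ M * ‖x‖ + ‖x‖ := by gcongr
          _ = (M + 1) * ‖x‖ := by ring
    calc ‖L x‖ ≤ ‖c₀ • x‖ + ‖∫ u in Ioi (0 : ℝ), (T u x - x) ∂μ‖ := norm_add_le _ _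
      _ ≤ |c₀| * ‖x‖ + (M + 1) * ‖x‖ * (μ (Ioi (0 : ℝ))).toReal := by
          rw [norm_smul, Real.norm_eq_abs]; gcongr
      _ = (|c₀| + (M + 1) * (μ (Ioi (0 : ℝ))).toReal) * ‖x‖ := by ring
  refine ⟨L.mkContinuous _ hbd, fun x => rfl, L.mkContinuous_norm_le hCnn hbd⟩
end
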